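/- Validity of the time-window energy inequality: let J be a finite job set with processing times p_j ≥ 0, resource rates c_j ≥ 0, and capacity C > 0, and let s : J → ℝ be a cumulative schedule. Then for all real numbers t₁ ≤ t₂, the total energy of jobs running entirely within [t₁, t₂] satisfies Σ_{j : t₁ ≤ s_j and s_j + p_j ≤ t₂} p_j c_j ≤ C (t₂ − t₁). In particular, if every job j respects its time window (r_j ≤ s_j and s_j + p_j ≤ d_j), then Σ_{j : t₁ ≤ r_j and d_j ≤ t₂} p_j c_j ≤ C (t₂ − t₁). -/

import Mathlib

/-!
The resource load `t ↦ ∑ j, c j · 𝟙[s j, s j + p j)(t)` is bounded by `C` pointwise, and the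
energy `p j * c j` of a job running inside `[t₁, t₂]` is at most its contribution to the
integral of the load over `[t₁, t₂)`. Integrating the pointwise bound gives the energy bound;
the time-window version follows because a job whose window lies inside `[t₁, t₂]` also runs
inside `[t₁, t₂]`.
-/

/-- `s` is a cumulative schedule of the job set `J` with processing times `p`,
resource consumption rates `c`, and resource capacity `C`: at every time `t`,
the total rate of resource consumption of the jobs running at `t` is at most `C`. -/
def CumulativeSchedule {ι : Type*} (J : Finset ι) (p c : ι → ℝ) (C : ℝ) (s : ι → ℝ) : Prop :=
  ∀ t : ℝ, ∑ j ∈ J.filter (fun j => s j ≤ t ∧ t < s j + p j), c j ≤ C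

open MeasureTheory Set

theorem setIntegral_Ico_indicator_Ico_const {t₁ t₂ a b : ℝ} (c : ℝ) (h₁ : t₁ ≤ a) (h₂ : b ≤ t₂) :
    ∫ t in Ico t₁ t₂, (Ico a b).indicator (fun _ => c) t = max (b - a) 0 * c := by
  rw [setIntegral_indicator measurableSet_Ico, inter_eq_self_of_subset_right (Ico_subset_Ico h₁ h₂),
    setIntegral_const, Real.volume_real_Ico, smul_eq_mul]

section CumulativeSchedule

variable {ι : Type*} {J : Finset ι} {p c : ι → ℝ} {C : ℝ} {s : ι → ℝ}

theorem sum_indicator_Ico_eq_sum_filter (J : Finset ι) (p c s : ι → ℝ) (t : ℝ) :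
    ∑ j ∈ J, (Ico (s j) (s j + p j)).indicator (fun _ => c j) t =
      ∑ j ∈ J.filter (fun j => s j ≤ t ∧ t < s j + p j), c j := by
  simp only [Finset.sum_filter, indicator_apply, mem_Ico]

theorem CumulativeSchedule.mono {J' : Finset ι} (hcum : CumulativeSchedule J p c C s)
    (hJ' : J' ⊆ J) (hc : ∀ j ∈ J, 0 ≤ c j) : CumulativeSchedule J' p c C s := fun t =>
  (Finset.sum_le_sum_of_subset_of_nonneg (Finset.filter_subset_filter _ hJ')
    fun j hj _ => hc j (Finset.mem_of_mem_filter j hj)).trans (hcum t)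

theorem CumulativeSchedule.sum_energy_le (hcum : CumulativeSchedule J p c C s)
    (hc : ∀ j ∈ J, 0 ≤ c j) {t₁ t₂ : ℝ} (ht : t₁ ≤ t₂)
    (hJ : ∀ j ∈ J, t₁ ≤ s j ∧ s j + p j ≤ t₂) :
    ∑ j ∈ J, p j * c j ≤ C * (t₂ - t₁) := by
  have hint : ∀ j ∈ J, IntegrableOn (fun t => (Ico (s j) (s j + p j)).indicator (fun _ => c j) t)
      (Ico t₁ t₂) := fun j _ =>
    (integrableOn_const measure_Ico_lt_top.ne).indicator measurableSet_Ico
  calc ∑ j ∈ J, p j * c j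
      ≤ ∑ j ∈ J, ∫ t in Ico t₁ t₂, (Ico (s j) (s j + p j)).indicator (fun _ => c j) t := by
        refine Finset.sum_le_sum fun j hj => ?_
        rw [setIntegral_Ico_indicator_Ico_const _ (hJ j hj).1 (hJ j hj).2, add_sub_cancel_left]
        exact mul_le_mul_of_nonneg_right (le_max_left _ _) (hc j hj)
    _ = ∫ t in Ico t₁ t₂, ∑ j ∈ J, (Ico (s j) (s j + p j)).indicator (fun _ => c j) t :=
        (integral_finsetSum J hint).symm
    _ ≤ ∫ _ in Ico t₁ t₂, C :=
        setIntegral_mono_on (integrable_finsetSum J hint)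
          (integrableOn_const measure_Ico_lt_top.ne) measurableSet_Ico fun t _ =>
          (sum_indicator_Ico_eq_sum_filter J p c s t).trans_le (hcum t)
    _ = C * (t₂ - t₁) := by
        rw [setIntegral_const, Real.volume_real_Ico_of_le ht, smul_eq_mul, mul_comm]

end CumulativeSchedule

theorem stmt_12_general {ι : Type*} (J : Finset ι) (p c : ι → ℝ) (C : ℝ)
    (hc : ∀ j ∈ J, 0 ≤ c j)
    (s : ι → ℝ)
    (hcum : CumulativeSchedule J p c C s) :
    (∀ t₁ t₂ : ℝ, t₁ ≤ t₂ →
      ∑ j ∈ J.filter (fun j => t₁ ≤ s j ∧ s j + p j ≤ t₂), p j * c j ≤ C * (t₂ - t₁)) ∧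
    (∀ r d : ι → ℝ, (∀ j ∈ J, r j ≤ s j ∧ s j + p j ≤ d j) →
      ∀ t₁ t₂ : ℝ, t₁ ≤ t₂ →
        ∑ j ∈ J.filter (fun j => t₁ ≤ r j ∧ d j ≤ t₂), p j * c j ≤ C * (t₂ - t₁)) := by
  have energy_le {J' : Finset ι} (hJ' : J' ⊆ J) {t₁ t₂ : ℝ} (ht : t₁ ≤ t₂)
      (hrun : ∀ j ∈ J', t₁ ≤ s j ∧ s j + p j ≤ t₂) : ∑ j ∈ J', p j * c j ≤ C * (t₂ - t₁) :=
    (hcum.mono hJ' hc).sum_energy_le (fun j hj => hc j (hJ' hj)) ht hrun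
  constructor
  · exact fun t₁ t₂ ht => energy_le (Finset.filter_subset _ J) ht fun j hj => (Finset.mem_filter.1 hj).2
  · intro r d hwin t₁ t₂ ht
    refine energy_le (Finset.filter_subset _ J) ht fun j hj => ?_
    obtain ⟨hjJ, hr, hd⟩ := Finset.mem_filter.1 hj
    exact ⟨hr.trans (hwin j hjJ).1, (hwin j hjJ).2.trans hd⟩

/-- Validity of the time-window energy inequality: in any cumulative schedule, the
total energy of jobs running entirely within `[t₁, t₂]` is at most `C (t₂ - t₁)`.
In particular, if every job respects its time window `[r j, d j]`, the total energy
of jobs whose time windows lie inside `[t₁, t₂]` is at most `C (t₂ - t₁)`. -/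
theorem stmt_12 {ι : Type*} (J : Finset ι) (p c : ι → ℝ) (C : ℝ)
    (hC : 0 < C)
    (hp : ∀ j ∈ J, 0 ≤ p j)
    (hc : ∀ j ∈ J, 0 ≤ c j)
    (s : ι → ℝ)
    (hcum : CumulativeSchedule J p c C s) :
    (∀ t₁ t₂ : ℝ, t₁ ≤ t₂ →
      ∑ j ∈ J.filter (fun j => t₁ ≤ s j ∧ s j + p j ≤ t₂), p j * c j ≤ C * (t₂ - t₁)) ∧
    (∀ r d : ι → ℝ, (∀ j ∈ J, r j ≤ s j ∧ s j + p j ≤ d j) →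
      ∀ t₁ t₂ : ℝ, t₁ ≤ t₂ →
        ∑ j ∈ J.filter (fun j => t₁ ≤ r j ∧ d j ≤ t₂), p j * c j ≤ C * (t₂ - t₁)) :=
  stmt_12_general J p c C hc s hcum
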